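/- The function 𝔧ₙ(x) = αₙ·|K|^{−(n−2)/4}·((n−2)/2)·(|x|² + 1 − D²)·(|x̃|² + (xₙ + D)² − 1)^{−n/2} solves the linearized problem: −cₙ·Δ𝔧ₙ + ((n+2)/(n−2))·|K|·U^{4/(n−2)}·𝔧ₙ = 0 in ℝⁿ₊, and (2/(n−2))·∂𝔧ₙ/∂ν(x̃,0) = (n/(n−2))·H·U(x̃,0)^{2/(n−2)}·𝔧ₙ(x̃,0) for all x̃ ∈ ℝ^{n−1}, where ∂/∂ν = −∂/∂xₙ. -/

import Mathlib

open Real MeasureTheory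

noncomputable section

/-- `αₙ = (4n(n−1))^((n−2)/4)`. -/
def alphaN (n : ℕ) : ℝ := (4 * (n : ℝ) * ((n : ℝ) - 1)) ^ (((n : ℝ) - 2) / 4)

/-- `cₙ = 4(n−1)/(n−2)`. -/
def cN (n : ℕ) : ℝ := 4 * ((n : ℝ) - 1) / ((n : ℝ) - 2)

/-- Points of `ℝⁿ = ℝ^{n-1} × ℝ`, written as pairs `(y, xₙ)`. -/
abbrev HalfPt (n : ℕ) := (Fin (n - 1) → ℝ) × ℝ

/-- `|y|² + (xₙ + D)² − 1`. -/
def QD (n : ℕ) (D : ℝ) (x : HalfPt n) : ℝ := (∑ i, (x.1 i) ^ 2) + (x.2 + D) ^ 2 - 1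

/-- The standard bubble `U(x) = αₙ |K|^{-(n-2)/4} (|y|² + (xₙ+D)² − 1)^{-(n-2)/2}`. -/
def bubbleU (n : ℕ) (K D : ℝ) (x : HalfPt n) : ℝ :=
  alphaN n * |K| ^ (-(((n : ℝ) - 2) / 4)) * QD n D x ^ (-(((n : ℝ) - 2) / 2))

/-- Second directional derivative of `f` in the direction `v` at `x`. -/
def dd2 (n : ℕ) (f : HalfPt n → ℝ) (v : HalfPt n) (x : HalfPt n) : ℝ :=
  fderiv ℝ (fun y => fderiv ℝ f y v) x v

/-- Euclidean Laplacian: sum of the second partial derivatives along the coordinate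
directions of `ℝ^{n-1} × ℝ`. -/
def lap (n : ℕ) (f : HalfPt n → ℝ) (x : HalfPt n) : ℝ :=
  (∑ i : Fin (n - 1), dd2 n f (Pi.single i 1, 0) x) + dd2 n f ((0 : Fin (n - 1) → ℝ), 1) x

/-- The bubble family `U_{δ,x₀(δ)}` with `x₀(δ) = (t, −Dδ)`. -/
def bubbleFam (n : ℕ) (K D δ : ℝ) (t : Fin (n - 1) → ℝ) (x : HalfPt n) : ℝ :=
  alphaN n * |K| ^ (-(((n : ℝ) - 2) / 4)) * δ ^ (((n : ℝ) - 2) / 2) *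
    ((∑ i, (x.1 i - t i) ^ 2) + (x.2 + D * δ) ^ 2 - δ ^ 2) ^ (-(((n : ℝ) - 2) / 2))

/-- `𝔧ᵢ`, `i = 1, …, n−1`: the tangential derivatives of the bubble. -/
def jTan (n : ℕ) (K D : ℝ) (i : Fin (n - 1)) (x : HalfPt n) : ℝ :=
  alphaN n * |K| ^ (-(((n : ℝ) - 2) / 4)) * (2 - (n : ℝ)) * x.1 i * QD n D x ^ (-((n : ℝ) / 2))

/-- `𝔧ₙ`. -/
def jNor (n : ℕ) (K D : ℝ) (x : HalfPt n) : ℝ :=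
  alphaN n * |K| ^ (-(((n : ℝ) - 2) / 4)) * (((n : ℝ) - 2) / 2) *
    ((∑ i, (x.1 i) ^ 2) + x.2 ^ 2 + 1 - D ^ 2) * QD n D x ^ (-((n : ℝ) / 2))

/-- All the `𝔧ᵢ`, `i = 1, …, n`, indexed by `Fin n`. -/
def jAll (n : ℕ) (K D : ℝ) (i : Fin n) (x : HalfPt n) : ℝ :=
  if h : (i : ℕ) < n - 1 then jTan n K D ⟨(i : ℕ), h⟩ x else jNor n K D x

/-- `I^n_{n-1} = ∫₀^∞ ρⁿ (1+ρ²)^{-(n-1)} dρ`. -/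
def Iconst (n : ℕ) : ℝ := ∫ ρ in Set.Ioi (0 : ℝ), ρ ^ n / (1 + ρ ^ 2) ^ (n - 1)

/-- `ω_{n-1}`: the `(n−2)`-dimensional Hausdorff measure of the unit sphere
`S^{n-2} ⊆ ℝ^{n-1}`. -/
def omegaN (n : ℕ) : ℝ :=
  (μH[(n : ℝ) - 2] (Metric.sphere (0 : EuclideanSpace ℝ (Fin (n - 1))) 1)).toReal

/-- `φ_m(D) = ∫_D^∞ (t²−1)^{−m} dt`. -/
def phiFun (m D : ℝ) : ℝ := ∫ t in Set.Ioi D, (t ^ 2 - 1) ^ (-m)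

/-- `|∇f(x)|²`, the squared Euclidean norm of the gradient. -/
def gradSq (n : ℕ) (f : HalfPt n → ℝ) (x : HalfPt n) : ℝ :=
  (∑ i : Fin (n - 1), (fderiv ℝ f x (Pi.single i 1, (0 : ℝ))) ^ 2) +
    (fderiv ℝ f x ((0 : Fin (n - 1) → ℝ), 1)) ^ 2

/-- The energy of the bubble. -/
def energyE (n : ℕ) (K H D : ℝ) : ℝ :=
  cN n / 2 * (∫ x in {x : HalfPt n | 0 < x.2}, gradSq n (bubbleU n K D) x) +
    ((n : ℝ) - 2) / (2 * (n : ℝ)) * |K| *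
      (∫ x in {x : HalfPt n | 0 < x.2}, bubbleU n K D x ^ (2 * (n : ℝ) / ((n : ℝ) - 2))) -
    ((n : ℝ) - 2) * H *
      (∫ y : Fin (n - 1) → ℝ, bubbleU n K D (y, 0) ^ (2 * ((n : ℝ) - 1) / ((n : ℝ) - 2)))

/-- The Euclidean norm `|x|` on `ℝ^{n-1} × ℝ`. -/
def enormE (n : ℕ) (x : HalfPt n) : ℝ := Real.sqrt ((∑ i, (x.1 i) ^ 2) + x.2 ^ 2)

/-- The source term `E_h`. -/
def Ehsrc (n : ℕ) (K D : ℝ) (h : Fin (n - 1) → Fin (n - 1) → ℝ) (x : HalfPt n) : ℝ :=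
  (8 * ((n : ℝ) - 1) / ((n : ℝ) - 2)) *
    (∑ i : Fin (n - 1), ∑ j : Fin (n - 1),
      h i j *
        fderiv ℝ (fun y => fderiv ℝ (bubbleU n K D) y (Pi.single j 1, (0 : ℝ))) x
          (Pi.single i 1, (0 : ℝ))) * x.2

/-!
Write `𝔧ₙ = C · P · Q^(-n/2)` with `P = |x|² + 1 - D²` and `Q = |x̃|² + (xₙ + D)² - 1`, both
quadrics with Hessian `2·Id`. The Leibniz rule for second derivatives of `P · Q^a`, summed over
the coordinate directions, together with `|∇Q|² = 4(Q + 1)` and `P + Q = 2(|x|² + D xₙ)`, gives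
`Δ(P Q^(-n/2)) = n(n+2) Q⁻² · P Q^(-n/2)`. Since `U^(4/(n-2)) = 4n(n-1) / (|K| Q²)` and
`cₙ n (n+2) = 4n(n-1)(n+2)/(n-2)`, the interior equation follows. On `xₙ = 0` one has
`∂ₙ(P Q^(-n/2)) = -n D Q⁻¹ · P Q^(-n/2)` and `U^(2/(n-2)) = 2√(n(n-1)) / (√|K| Q)`, and the
boundary condition is then exactly the defining relation `D √|K| = √(n(n-1)) H`.
-/

open scoped Topology

section MulRpow

variable {E : Type*} [NormedAddCommGroup E] [NormedSpace ℝ E] {p q : E → ℝ} {x v : E}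

theorem fderiv_mul_rpow_apply (hp : DifferentiableAt ℝ p x) (hq : DifferentiableAt ℝ q x)
    (hx : q x ≠ 0) (a : ℝ) (v : E) :
    fderiv ℝ (fun y => p y * q y ^ a) x v =
      fderiv ℝ p x v * q x ^ a + a * p x * fderiv ℝ q x v * q x ^ (a - 1) := by
  rw [(hp.hasFDerivAt.fun_mul (hq.hasFDerivAt.rpow_const (Or.inl hx))).fderiv]
  simp only [add_apply, smul_apply, smul_eq_mul]
  ring

theorem fderiv_fderiv_mul_rpow_apply (hp : Differentiable ℝ p) (hq : Differentiable ℝ q)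
    {p₂ q₂ : E →L[ℝ] ℝ} (hp₂ : HasFDerivAt (fun y => fderiv ℝ p y v) p₂ x)
    (hq₂ : HasFDerivAt (fun y => fderiv ℝ q y v) q₂ x) (hx : q x ≠ 0) (a : ℝ) :
    fderiv ℝ (fun y => fderiv ℝ (fun z => p z * q z ^ a) y v) x v =
      p₂ v * q x ^ a + 2 * a * fderiv ℝ p x v * fderiv ℝ q x v * q x ^ (a - 1)
        + a * p x * ((a - 1) * fderiv ℝ q x v ^ 2 * q x ^ (a - 2) + q₂ v * q x ^ (a - 1)) := by
  have hfirst : (fun y => fderiv ℝ (fun z => p z * q z ^ a) y v) =ᶠ[𝓝 x]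
      fun y => fderiv ℝ p y v * q y ^ a + a * p y * fderiv ℝ q y v * q y ^ (a - 1) := by
    filter_upwards [hq.continuous.continuousAt.eventually_ne hx] with y hy
    exact fderiv_mul_rpow_apply (hp y) (hq y) hy a v
  have hqa (b : ℝ) := (hq x).hasFDerivAt.rpow_const (p := b) (Or.inl hx)
  rw [hfirst.fderiv_eq, ((hp₂.fun_mul (hqa a)).fun_add
    ((((hp x).hasFDerivAt.const_mul a).fun_mul hq₂).fun_mul (hqa (a - 1)))).fderiv]
  simp only [add_apply, smul_apply, smul_eq_mul, show a - 1 - 1 = a - 2 by ring]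
  ring

end MulRpow

/-- The Euclidean pairing with `w`, written out because `HalfPt n` carries the sup norm. -/
def dotCLM (n : ℕ) (w : HalfPt n) : HalfPt n →L[ℝ] ℝ :=
  ∑ i, w.1 i • (ContinuousLinearMap.proj i).comp (ContinuousLinearMap.fst ℝ _ ℝ) +
    w.2 • ContinuousLinearMap.snd ℝ _ ℝ

@[simp]
theorem dotCLM_apply {n : ℕ} (w v : HalfPt n) :
    dotCLM n w v = ∑ i, w.1 i * v.1 i + w.2 * v.2 := by
  simp [dotCLM]

def quadric (n : ℕ) (c b k : ℝ) (y : HalfPt n) : ℝ :=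
  c * ((∑ i, y.1 i ^ 2) + (y.2 + b) ^ 2 + k)

section Quadric

variable {n : ℕ} {c b k : ℝ}

theorem hasFDerivAt_quadric (y : HalfPt n) :
    HasFDerivAt (quadric n c b k) ((2 * c) • dotCLM n (y.1, y.2 + b)) y := by
  have hcoord (i : Fin (n - 1)) := ((ContinuousLinearMap.proj (R := ℝ) i).comp
    (ContinuousLinearMap.fst ℝ _ ℝ)).hasFDerivAt (x := y)
  have hlast := ((ContinuousLinearMap.snd ℝ (Fin (n - 1) → ℝ) ℝ).hasFDerivAt (x := y)).add_const
    b
  have h := (((HasFDerivAt.fun_sum (u := Finset.univ) fun i _ => (hcoord i).pow 2).fun_add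
    (hlast.pow 2)).add_const k).const_mul c
  refine h.congr_fderiv (ContinuousLinearMap.ext fun v => ?_)
  simp only [smul_apply, add_apply, sum_apply, dotCLM_apply, smul_eq_mul,
    ContinuousLinearMap.comp_apply, ContinuousLinearMap.coe_fst', ContinuousLinearMap.coe_snd',
    ContinuousLinearMap.proj_apply, nsmul_eq_mul, mul_add, Finset.mul_sum]
  ring_nf

theorem differentiable_quadric : Differentiable ℝ (quadric n c b k) :=
  fun y => (hasFDerivAt_quadric y).differentiableAt

theorem fderiv_quadric_apply (y v : HalfPt n) :
    fderiv ℝ (quadric n c b k) y v = 2 * c * (dotCLM n v y + b * v.2) := by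
  rw [(hasFDerivAt_quadric y).fderiv]
  simp only [smul_apply, dotCLM_apply, smul_eq_mul, mul_comm (v.1 _)]
  ring

theorem hasFDerivAt_fderiv_quadric_apply (x v : HalfPt n) :
    HasFDerivAt (fun y => fderiv ℝ (quadric n c b k) y v) ((2 * c) • dotCLM n v) x := by
  simp only [fderiv_quadric_apply]
  exact ((dotCLM n v).hasFDerivAt.add_const _).const_mul _

end Quadric

section JNor

variable {n : ℕ} {K D : ℝ}

theorem QD_eq_quadric : QD n D = quadric n 1 D (-1) := by
  funext y
  simp only [QD, quadric]
  ring

theorem jNor_eq_quadric_mul_rpow : jNor n K D = fun y =>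
    quadric n (alphaN n * |K| ^ (-(((n : ℝ) - 2) / 4)) * (((n : ℝ) - 2) / 2)) 0 (1 - D ^ 2) y *
      QD n D y ^ (-((n : ℝ) / 2)) := by
  funext y
  simp only [jNor, quadric]
  ring

theorem lap_quadric_mul_rpow (hn : 1 ≤ n) (C : ℝ) {x : HalfPt n} (hx : 0 < QD n D x) :
    lap n (fun y => quadric n C 0 (1 - D ^ 2) y * QD n D y ^ (-((n : ℝ) / 2))) x =
      n * (n + 2) / QD n D x ^ 2 *
        (quadric n C 0 (1 - D ^ 2) x * QD n D x ^ (-((n : ℝ) / 2))) := by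
  rw [QD_eq_quadric] at hx ⊢
  set a : ℝ := -((n : ℝ) / 2) with ha
  have hdd2 (v : HalfPt n) := fderiv_fderiv_mul_rpow_apply (p := quadric n C 0 (1 - D ^ 2))
    differentiable_quadric differentiable_quadric (hasFDerivAt_fderiv_quadric_apply x v)
    (hasFDerivAt_fderiv_quadric_apply x v) hx.ne' a
  set Q := quadric n 1 D (-1) x with hQ
  set P := quadric n 1 0 (1 - D ^ 2) x with hP
  set E := Q ^ (a - 2)
  have hCP : quadric n C 0 (1 - D ^ 2) x = C * P := by simp only [hP, quadric]; ring
  have hpow1 : Q ^ (a - 1) = E * Q := by rw [← Real.rpow_add_one hx.ne']; ring_nf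
  have hpow0 : Q ^ a = E * Q ^ 2 := by rw [← Real.rpow_add_natCast hx.ne']; norm_num
  have htan (i : Fin (n - 1)) :
      dd2 n (fun y => quadric n C 0 (1 - D ^ 2) y * quadric n 1 D (-1) y ^ a) (Pi.single i 1, 0) x
        = C * E * (2 * Q ^ 2 + 2 * a * P * Q)
          + C * E * (8 * a * Q + 4 * a * (a - 1) * P) * x.1 i ^ 2 := by
    rw [dd2, hdd2]
    simp only [fderiv_quadric_apply, smul_apply, dotCLM_apply, Pi.single_apply, ite_mul, one_mul,
      zero_mul, Finset.sum_ite_eq', Finset.mem_univ, ↓reduceIte, mul_one, mul_zero, add_zero,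
      smul_eq_mul, hCP, hpow0, hpow1]
    ring
  have hnor : dd2 n (fun y => quadric n C 0 (1 - D ^ 2) y * quadric n 1 D (-1) y ^ a) (0, 1) x
        = C * E * (2 * Q ^ 2 + 8 * a * x.2 * (x.2 + D) * Q
          + a * P * (4 * (a - 1) * (x.2 + D) ^ 2 + 2 * Q)) := by
    rw [dd2, hdd2]
    simp only [fderiv_quadric_apply, smul_apply, dotCLM_apply, Pi.zero_apply, zero_mul, mul_zero,
      Finset.sum_const_zero, mul_one, zero_add, one_mul, add_zero, smul_eq_mul, hCP, hpow0, hpow1]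
    ring
  rw [lap, Finset.sum_congr rfl fun i _ => htan i, Finset.sum_add_distrib, Finset.sum_const,
    ← Finset.mul_sum, Finset.card_univ, Fintype.card_fin, nsmul_eq_mul, Nat.cast_sub hn,
    hnor, hCP, hpow0]
  have hS : ∑ i, x.1 i ^ 2 = Q + 1 - (x.2 + D) ^ 2 := by simp only [hQ, quadric]; ring
  have hPQ : P = Q - 2 * D * (x.2 + D) + 2 := by simp only [hP, hQ, quadric]; ring
  rw [hS, hPQ, ha]
  field_simp
  ring

theorem fderiv_jNor_normal_of_snd_eq_zero {x : HalfPt n} (hx : 0 < QD n D x) (hx₂ : x.2 = 0) :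
    fderiv ℝ (jNor n K D) x (0, 1) = -(n * D) / QD n D x * jNor n K D x := by
  rw [QD_eq_quadric] at hx
  rw [jNor_eq_quadric_mul_rpow, QD_eq_quadric, fderiv_mul_rpow_apply
    differentiable_quadric.differentiableAt differentiable_quadric.differentiableAt hx.ne',
    Real.rpow_sub_one hx.ne']
  simp only [fderiv_quadric_apply, dotCLM_apply, Pi.zero_apply, zero_mul, Finset.sum_const_zero,
    hx₂, mul_zero, add_zero, mul_one, zero_add]
  field_simp

theorem QD_pos {x : HalfPt n} (hx : 0 ≤ x.2) (hD : 1 < D) : 0 < QD n D x := by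
  have : 1 < (x.2 + D) ^ 2 := by nlinarith
  have := Finset.sum_nonneg fun i (_ : i ∈ Finset.univ) => sq_nonneg (x.1 i)
  simp only [QD]
  linarith

end JNor

section Bubble

variable {n : ℕ} {K D : ℝ} {x : HalfPt n}

theorem bubbleU_rpow_two_div (hn : 2 < n) (hx : 0 < QD n D x) :
    bubbleU n K D x ^ (2 / ((n : ℝ) - 2)) = 2 * √(n * (n - 1)) / (√|K| * QD n D x) := by
  have hn' : (2 : ℝ) < n := by exact_mod_cast hn
  have hn2 : (n : ℝ) - 2 ≠ 0 := by linarith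
  have hpos : (0 : ℝ) ≤ 4 * n * (n - 1) := by nlinarith
  rw [bubbleU, alphaN, Real.mul_rpow (by positivity) (by positivity),
    Real.mul_rpow (by positivity) (by positivity), ← Real.rpow_mul hpos,
    ← Real.rpow_mul (abs_nonneg K), ← Real.rpow_mul hx.le]
  have e1 : ((n : ℝ) - 2) / 4 * (2 / ((n : ℝ) - 2)) = 1 / 2 := by field_simp; ring
  have e2 : -(((n : ℝ) - 2) / 4) * (2 / ((n : ℝ) - 2)) = -(1 / 2) := by field_simp; ring
  have e3 : -(((n : ℝ) - 2) / 2) * (2 / ((n : ℝ) - 2)) = -1 := by field_simp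
  rw [e1, e2, e3, Real.rpow_neg (abs_nonneg K), Real.rpow_neg_one, ← Real.sqrt_eq_rpow,
    ← Real.sqrt_eq_rpow, show (4 : ℝ) * n * (n - 1) = 2 ^ 2 * (n * (n - 1)) by ring,
    Real.sqrt_mul (by norm_num), Real.sqrt_sq (by norm_num)]
  ring

theorem bubbleU_rpow_four_div (hn : 2 < n) (hx : 0 < QD n D x) :
    bubbleU n K D x ^ (4 / ((n : ℝ) - 2)) = 4 * (n * (n - 1)) / (|K| * QD n D x ^ 2) := by
  have hn' : (2 : ℝ) < n := by exact_mod_cast hn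
  have hU : 0 ≤ bubbleU n K D x := by
    unfold bubbleU alphaN
    have : (0 : ℝ) ≤ 4 * n * (n - 1) := by nlinarith
    positivity
  rw [show 4 / ((n : ℝ) - 2) = 2 / ((n : ℝ) - 2) * (2 : ℕ) by push_cast; ring,
    Real.rpow_mul_natCast hU, bubbleU_rpow_two_div hn hx, div_pow, mul_pow, mul_pow,
    Real.sq_sqrt (by nlinarith), Real.sq_sqrt (abs_nonneg K)]
  ring

end Bubble

theorem jn_solves_linearized_problem_general
    (n : ℕ) (hn : 4 ≤ n) (K H D : ℝ) (hK : K < 0)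
    (hD : D = Real.sqrt ((n : ℝ) * ((n : ℝ) - 1)) * H / Real.sqrt |K|) (hD1 : 1 < D) :
    (∀ x : HalfPt n, 0 < x.2 →
      -(cN n) * lap n (jNor n K D) x +
          (((n : ℝ) + 2) / ((n : ℝ) - 2)) * |K| *
            bubbleU n K D x ^ (4 / ((n : ℝ) - 2)) * jNor n K D x = 0) ∧
    (∀ y : Fin (n - 1) → ℝ,
      (2 / ((n : ℝ) - 2)) * (-(fderiv ℝ (jNor n K D) (y, 0) ((0 : Fin (n - 1) → ℝ), 1)))
        = ((n : ℝ) / ((n : ℝ) - 2)) * H *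
            bubbleU n K D (y, 0) ^ (2 / ((n : ℝ) - 2)) * jNor n K D (y, 0)) := by
  have hn2 : (n : ℝ) - 2 ≠ 0 := by
    have : (4 : ℝ) ≤ n := by exact_mod_cast hn
    linarith
  have hK0 : |K| ≠ 0 := abs_ne_zero.2 hK.ne
  refine ⟨fun x hx => ?_, fun y => ?_⟩
  · have hQ := QD_pos hx.le hD1
    rw [jNor_eq_quadric_mul_rpow, lap_quadric_mul_rpow (by omega) _ hQ,
      bubbleU_rpow_four_div (by omega) hQ, cN]
    field_simp
    ring
  · have hQ := QD_pos (x := (y, 0)) le_rfl hD1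
    rw [fderiv_jNor_normal_of_snd_eq_zero hQ rfl, bubbleU_rpow_two_div (by omega) hQ, hD]
    have hK' : √|K| ≠ 0 := by positivity
    field_simp

theorem jn_solves_linearized_problem
    (n : ℕ) (hn : 4 ≤ n) (K H D : ℝ) (hK : K < 0) (hH : 0 < H)
    (hD : D = Real.sqrt ((n : ℝ) * ((n : ℝ) - 1)) * H / Real.sqrt |K|) (hD1 : 1 < D) :
    (∀ x : HalfPt n, 0 < x.2 →
      -(cN n) * lap n (jNor n K D) x +
          (((n : ℝ) + 2) / ((n : ℝ) - 2)) * |K| *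
            bubbleU n K D x ^ (4 / ((n : ℝ) - 2)) * jNor n K D x = 0) ∧
    (∀ y : Fin (n - 1) → ℝ,
      (2 / ((n : ℝ) - 2)) * (-(fderiv ℝ (jNor n K D) (y, 0) ((0 : Fin (n - 1) → ℝ), 1)))
        = ((n : ℝ) / ((n : ℝ) - 2)) * H *
            bubbleU n K D (y, 0) ^ (2 / ((n : ℝ) - 2)) * jNor n K D (y, 0)) :=
  jn_solves_linearized_problem_general n hn K H D hK hD hD1
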